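/- Let ℍ denote the real quaternions, f ∈ ℍ[x] nonzero, and t, n ∈ ℝ with t² − 4n < 0. Suppose the polynomial x² − tx + n (with real, hence central, coefficients) divides the companion polynomial C_f = f̄·f in ℍ[x], i.e., f̄·f = h·(x² − tx + n) for some h ∈ ℍ[x]. Then f has a root λ ∈ ℍ with Tr(λ) = t and Norm(λ) = n, i.e., λ + λ̄ = t, λ̄λ = n, and the left evaluation f(λ) = 0. -/

import Mathlib

/-!
Divide `f` by the central quadratic `q = X² - tX + n`: `f = g q + r` with `r = aX + b`. As `q` is
central and self-conjugate, `f̄ f ≡ r̄ r` modulo `q`, so `q` divides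
`r̄ r = N(a) X² + (āb + b̄a) X + N(b)`, and comparing degrees gives `r̄ r = N(a) q`.
If `a = 0` this forces `r = 0`, and any quaternion of trace `t` and norm `n` (one exists because
`t² < 4n`) is a root of `q`, hence of `f`. Otherwise `λ = -a⁻¹b` is the root of `r`, and the
coefficient identities `āb + b̄a = -t N(a)`, `N(b) = n N(a)` say, after substituting `b = -aλ`,
that `λ` has trace `t` and norm `n`. Then `q(λ) = 0`, and so `f(λ) = (g q)(λ) + r(λ) = 0`.
-/

open Polynomial

noncomputable def polyConj (f : (Quaternion ℝ)[X]) : (Quaternion ℝ)[X] :=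
  f.sum fun i a => C (star a) * X ^ i

local notation "ℍ" => Quaternion ℝ

theorem Polynomial.eval_mul_eq_zero_of_right {R : Type*} [Semiring R] {q : R[X]} {x : R}
    (p : R[X]) (hq : q.eval x = 0) : (p * q).eval x = 0 := by
  -- `(p * q).eval x = ∑ i, pᵢ * q.eval x * x ^ i` because `X` is central
  induction p using Polynomial.induction_on' with
  | add p₁ p₂ h₁ h₂ => rw [add_mul, eval_add, h₁, h₂, add_zero]
  | monomial k a =>
    rw [← C_mul_X_pow_eq_monomial, mul_assoc, X_pow_mul, eval_C_mul, eval_mul_X_pow, hq,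
      zero_mul, mul_zero]

theorem Polynomial.eq_C_of_mul_monic_natDegree_le {R : Type*} [Semiring R] [NoZeroDivisors R]
    {c q : R[X]} (hq : q.Monic) (h : (c * q).natDegree ≤ q.natDegree) : c = C (c.coeff 0) := by
  nontriviality R
  refine eq_C_of_natDegree_le_zero ?_
  rcases eq_or_ne c 0 with rfl | hc
  · simp
  · rw [natDegree_mul hc hq.ne_zero] at h
    omega

theorem Polynomial.eval_eq_zero_of_eval_modByMonic_eq_zero {R : Type*} [Ring R] {f q : R[X]}
    {x : R} (hcomm : Commute q (f /ₘ q)) (hq : q.eval x = 0) (hr : (f %ₘ q).eval x = 0) :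
    f.eval x = 0 := by
  rw [← modByMonic_add_div f q, eval_add, hr, zero_add, hcomm.eq, eval_mul_eq_zero_of_right _ hq]

theorem coeff_polyConj (f : ℍ[X]) (k : ℕ) : (polyConj f).coeff k = star (f.coeff k) := by
  simp only [polyConj, Polynomial.sum, finsetSum_coeff, coeff_C_mul_X_pow]
  rw [Finset.sum_ite_eq]
  split_ifs with hk
  · rfl
  · rw [notMem_support_iff.mp hk, star_zero]

theorem polyConj_add (p q : ℍ[X]) : polyConj (p + q) = polyConj p + polyConj q := by
  ext k : 1; simp [coeff_polyConj]

theorem polyConj_mul (p q : ℍ[X]) : polyConj (p * q) = polyConj q * polyConj p := by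
  ext k : 1
  simp only [coeff_polyConj, coeff_mul, star_sum, star_mul]
  rw [← Finset.Nat.sum_antidiagonal_swap]
  simp

theorem polyConj_C_mul_X_add_C (a b : ℍ) :
    polyConj (C a * X + C b) = C (star a) * X + C (star b) := by
  ext k : 1; rcases k with _ | _ | k <;> simp [coeff_polyConj, coeff_X, coeff_C]

noncomputable def realQuadratic (t n : ℝ) : ℍ[X] := X ^ 2 - C (t : ℍ) * X + C (n : ℍ)

theorem commute_C_coe (r : ℝ) (p : ℍ[X]) : Commute (C (r : ℍ)) p := by
  simpa [Polynomial.algebraMap_apply, Quaternion.algebraMap_def] using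
    Algebra.commute_algebraMap_left r p

theorem commute_realQuadratic (t n : ℝ) (p : ℍ[X]) : Commute (realQuadratic t n) p :=
  ((commute_X_pow p 2).sub_left ((commute_C_coe t p).mul_left (commute_X p))).add_left
    (commute_C_coe n p)

theorem realQuadratic_monic (t n : ℝ) : (realQuadratic t n).Monic := by
  unfold realQuadratic; monicity!

theorem natDegree_realQuadratic (t n : ℝ) : (realQuadratic t n).natDegree = 2 := by
  unfold realQuadratic; compute_degree!

theorem polyConj_realQuadratic (t n : ℝ) : polyConj (realQuadratic t n) = realQuadratic t n := by
  ext k : 1; rcases k with _ | _ | _ | k <;> simp [realQuadratic, coeff_polyConj, coeff_X, coeff_C]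

theorem eval_realQuadratic {t n : ℝ} {x : ℍ} (ht : x + star x = t) (hn : star x * x = n) :
    (realQuadratic t n).eval x = 0 := by
  simp only [realQuadratic, eval_add, eval_sub, eval_X_pow, eval_C_mul, eval_X, eval_C, ← ht,
    ← hn]
  noncomm_ring

theorem natDegree_modByMonic_realQuadratic_le (f : ℍ[X]) (t n : ℝ) :
    (f %ₘ realQuadratic t n).natDegree ≤ 1 := by
  have hq : realQuadratic t n ≠ 1 := fun h ↦ by simpa [h] using natDegree_realQuadratic t n
  have := natDegree_modByMonic_lt f (realQuadratic_monic t n) hq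
  rw [natDegree_realQuadratic] at this
  omega

theorem exists_polyConj_modByMonic_mul_self_eq_mul {q f h : ℍ[X]}
    (hcomm : ∀ p, Commute q p) (hconj : polyConj q = q) (hdiv : polyConj f * f = h * q) :
    ∃ c, polyConj (f %ₘ q) * (f %ₘ q) = c * q := by
  set g := f /ₘ q
  set r := f %ₘ q
  have hf : f = g * q + r := by rw [← (hcomm g).eq, add_comm, modByMonic_add_div]
  have key : polyConj f * f =
      (polyConj g * g * q + polyConj g * r + polyConj r * g) * q + polyConj r * r := by
    rw [hf, polyConj_add, polyConj_mul, hconj, (hcomm (polyConj g)).eq]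
    calc (polyConj g * q + polyConj r) * (g * q + r)
        = polyConj g * (q * g) * q + polyConj g * (q * r) + polyConj r * g * q +
            polyConj r * r := by noncomm_ring
      _ = _ := by rw [(hcomm g).eq, (hcomm r).eq]; noncomm_ring
  exact ⟨h - (polyConj g * g * q + polyConj g * r + polyConj r * g),
    by rw [sub_mul, ← hdiv, key, add_sub_cancel_left]⟩

theorem polyConj_mul_self_C_mul_X_add_C (a b : ℍ) :
    polyConj (C a * X + C b) * (C a * X + C b) =
      C (star a * a) * X ^ 2 + C (star a * b + star b * a) * X + C (star b * b) := by
  rw [polyConj_C_mul_X_add_C]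
  simp only [add_mul, mul_add, C_mul, C_add, mul_assoc, X_mul_C, sq]
  rw [← mul_assoc X, X_mul_C, mul_assoc]
  abel

theorem trace_norm_of_mul_add_eq_zero {a b x : ℍ} {t n : ℝ} (ha : a ≠ 0)
    (h₁ : star a * b + star b * a = -(star a * a * t)) (h₀ : star b * b = star a * a * n)
    (hx : a * x + b = 0) : x + star x = t ∧ star x * x = n := by
  obtain rfl : b = -(a * x) := eq_neg_of_add_eq_zero_right hx
  set N : ℝ := Quaternion.normSq a
  have hN : star a * a = N := Quaternion.star_mul_self a
  have hN₀ : (N : ℍ) ≠ 0 := by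
    rw [Ne, ← Quaternion.coe_zero, Quaternion.coe_inj]; exact Quaternion.normSq_ne_zero.2 ha
  simp only [star_neg, star_mul, neg_mul, mul_neg, neg_neg, mul_assoc, ← mul_assoc (star a) a,
    hN, ← mul_assoc (star x) (N : ℍ), ← Quaternion.coe_commutes N (star x)] at h₁ h₀
  constructor
  · apply mul_left_cancel₀ hN₀
    rw [mul_add, ← neg_inj, neg_add, h₁]
  · exact mul_left_cancel₀ hN₀ h₀

theorem exists_trace_norm_eq {t n : ℝ} (h : t ^ 2 < 4 * n) :
    ∃ x : ℍ, x + star x = t ∧ star x * x = n := by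
  set s := √(n - (t / 2) ^ 2)
  have hs : s ^ 2 = n - (t / 2) ^ 2 := Real.sq_sqrt (by nlinarith)
  let x : ℍ := ⟨t / 2, s, 0, 0⟩
  refine ⟨x, ?_, ?_⟩
  · rw [Quaternion.self_add_star, show x.re = t / 2 from rfl, two_mul,
      ← Quaternion.coe_add, add_halves]
  · rw [Quaternion.star_mul_self, Quaternion.normSq_def', Quaternion.coe_inj]
    change (t / 2) ^ 2 + s ^ 2 + 0 ^ 2 + 0 ^ 2 = n
    rw [hs]; ring

theorem eq_zero_or_exists_root_of_polyConj_mul_self_eq {r c : ℍ[X]} {t n : ℝ}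
    (hr : r.natDegree ≤ 1) (h : polyConj r * r = c * realQuadratic t n) :
    r = 0 ∨ ∃ x : ℍ, x + star x = t ∧ star x * x = n ∧ r.eval x = 0 := by
  set a := r.coeff 1
  set b := r.coeff 0
  have hr' : r = C a * X + C b := eq_X_add_C_of_natDegree_le_one hr
  rw [hr', polyConj_mul_self_C_mul_X_add_C] at h
  have hc : c = C (c.coeff 0) := by
    refine eq_C_of_mul_monic_natDegree_le (realQuadratic_monic t n) ?_
    rw [← h, natDegree_realQuadratic]
    compute_degree
  rw [hc, realQuadratic] at h
  have h₂ := congrArg (coeff · 2) h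
  have h₁ := congrArg (coeff · 1) h
  have h₀ := congrArg (coeff · 0) h
  simp only [coeff_add, coeff_sub, coeff_C_mul, coeff_X_pow, coeff_X, coeff_C] at h₂ h₁ h₀
  norm_num at h₂ h₁ h₀
  rw [← h₂] at h₁ h₀
  rcases eq_or_ne a 0 with ha | ha
  · left
    rw [ha, star_zero, zero_mul, zero_mul] at h₀
    have hb : b = 0 := (mul_eq_zero.1 h₀).elim star_eq_zero.1 id
    rw [hr', ha, hb, C_0, zero_mul, add_zero]
  · right
    have hx : a * -(a⁻¹ * b) + b = 0 := by
      rw [mul_neg, mul_inv_cancel_left₀ ha, neg_add_cancel]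
    obtain ⟨htr, hnorm⟩ := trace_norm_of_mul_add_eq_zero ha h₁ h₀ hx
    exact ⟨_, htr, hnorm, by rwa [hr', eval_add, eval_C_mul, eval_X, eval_C]⟩

theorem root_of_companion_quadratic_factor_general
    (f : (Quaternion ℝ)[X]) (t n : ℝ) (hdisc : t ^ 2 - 4 * n < 0)
    (h : (Quaternion ℝ)[X])
    (hdiv : polyConj f * f =
      h * (X ^ 2 - C ((t : Quaternion ℝ)) * X + C ((n : Quaternion ℝ)))) :
    ∃ lam : Quaternion ℝ,
      lam + star lam = (t : Quaternion ℝ) ∧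
      star lam * lam = (n : Quaternion ℝ) ∧
      f.eval lam = 0 := by
  obtain ⟨c, hc⟩ :=
    exists_polyConj_modByMonic_mul_self_eq_mul (commute_realQuadratic t n)
      (polyConj_realQuadratic t n) hdiv
  have hroot : ∀ x : ℍ, x + star x = t → star x * x = n →
      (f %ₘ realQuadratic t n).eval x = 0 → f.eval x = 0 :=
    fun x htr hnorm ↦ eval_eq_zero_of_eval_modByMonic_eq_zero (commute_realQuadratic t n _)
      (eval_realQuadratic htr hnorm)
  rcases eq_zero_or_exists_root_of_polyConj_mul_self_eq
      (natDegree_modByMonic_realQuadratic_le f t n) hc with hr | ⟨x, htr, hnorm, hx⟩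
  · obtain ⟨x, htr, hnorm⟩ := exists_trace_norm_eq (by linarith : t ^ 2 < 4 * n)
    exact ⟨x, htr, hnorm, hroot x htr hnorm (by rw [hr, eval_zero])⟩
  · exact ⟨x, htr, hnorm, hroot x htr hnorm hx⟩

/-- if `x² - t·x + n` (with `t, n` real, `t² - 4n < 0`) divides
the companion polynomial `C_f = f̄·f` of a nonzero quaternion polynomial `f`,
then `f` has a root `λ` with trace `t` and norm `n`. -/
theorem root_of_companion_quadratic_factor
    (f : (Quaternion ℝ)[X]) (hf : f ≠ 0) (t n : ℝ) (hdisc : t ^ 2 - 4 * n < 0)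
    (h : (Quaternion ℝ)[X])
    (hdiv : polyConj f * f =
      h * (X ^ 2 - C ((t : Quaternion ℝ)) * X + C ((n : Quaternion ℝ)))) :
    ∃ lam : Quaternion ℝ,
      lam + star lam = (t : Quaternion ℝ) ∧
      star lam * lam = (n : Quaternion ℝ) ∧
      f.eval lam = 0 :=
  root_of_companion_quadratic_factor_general f t n hdisc h hdiv
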